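/- arXiv:0902.0899 — 8 statements merged into one kernel-verified Lean document; each statement's English description precedes it below -/
import Mathlib

section
/- For every CSL-distance minspace model I = (Δ, d, ·^I) there exists a CSL-preferential model J on the same set Δ that is equivalent to I, i.e. A^I = A^J for every L_CSL-formula A. (In fact the model defined by x ≺_w y iff d(w,x) < d(w,y), with the same valuation of propositional variables, works: each ≺_w is modular, centered, satisfies the Limit Assumption, and the two models agree on all formulas.) -/
/-- Formulas of the language L_CSL: propositional variables, ⊥, negation,
conjunction, and the comparative similarity connective `cls` (A ⇇ B). -/
inductive CSLForm : Type
  | var : ℕ → CSLForm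
  | bot : CSLForm
  | neg : CSLForm → CSLForm
  | and : CSLForm → CSLForm → CSLForm
  | cls : CSLForm → CSLForm → CSLForm

namespace CSLForm

def top : CSLForm := neg bot
def or (A B : CSLForm) : CSLForm := neg (and (neg A) (neg B))
def imp (A B : CSLForm) : CSLForm := or (neg A) B

end CSLForm

/-- A boolean valuation respecting the classical connectives
(⇇-formulas and variables are treated as atoms). -/
def IsBoolVal (v : CSLForm → Bool) : Prop :=
  v .bot = false ∧ (∀ A, v (.neg A) = !v A) ∧ (∀ A B, v (.and A B) = (v A && v B))

/-- Classical tautologies of L_CSL. -/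
def CSLTautology (A : CSLForm) : Prop := ∀ v, IsBoolVal v → v A = true

/-- The Hilbert system CSMS. -/
inductive CSMS : CSLForm → Prop
  | taut {A : CSLForm} : CSLTautology A → CSMS A
  | mp {A B : CSLForm} : CSMS (A.imp B) → CSMS A → CSMS B
  | mon {A B : CSLForm} (C : CSLForm) : CSMS (A.imp B) → CSMS ((A.cls C).imp (B.cls C))
  | ax1 (A B : CSLForm) : CSMS ((A.cls B).neg.or (B.cls A).neg)
  | ax2 (A B C : CSLForm) : CSMS ((A.cls B).imp ((A.cls C).or (C.cls B)))
  | ax3 (A B : CSLForm) : CSMS ((A.and B.neg).imp (A.cls B))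
  | ax4 (A B : CSLForm) : CSMS ((A.cls B).imp B.neg)
  | ax5 (A B C : CSLForm) : CSMS (((A.cls B).and (A.cls C)).imp (A.cls (B.or C)))
  | ax6 (A : CSLForm) : CSMS ((A.cls .bot).imp (((A.cls .bot).neg.cls .bot).neg))

/-- Semantic extension of a formula, given preferential relations
`pref w x y` (meaning x ≺_w y) and a valuation of propositional variables. -/
def prefEval {W : Type} (pref : W → W → W → Prop) (val : ℕ → Set W) :
    CSLForm → Set W
  | .var i => val i
  | .bot => ∅
  | .neg A => (prefEval pref val A)ᶜ
  | .and A B => prefEval pref val A ∩ prefEval pref val B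
  | .cls A B =>
      {w | ∃ x ∈ prefEval pref val A, ∀ y ∈ prefEval pref val B, pref w x y}

/-- A CSL-preferential model. -/
structure CSLPrefModel (W : Type) where
  ne : Nonempty W
  pref : W → W → W → Prop
  modular : ∀ w x y z, pref w x y → pref w z y ∨ pref w x z
  centered : ∀ w x, x = w ∨ pref w w x
  limit : ∀ w (X : Set W), X.Nonempty → {y ∈ X | ∀ z, pref w z y → z ∉ X}.Nonempty
  val : ℕ → Set W

def CSLPrefModel.eval {W : Type} (M : CSLPrefModel W) : CSLForm → Set W :=
  prefEval M.pref M.val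

/-- Distance from a point to a set, in ℝ≥0∞ (so that it is ∞ on the empty set). -/
noncomputable def setDist {W : Type} (d : W → W → ℝ) (w : W) (X : Set W) : ENNReal :=
  ⨅ x ∈ X, ENNReal.ofReal (d w x)

/-- A CSL-distance minspace model. -/
structure CSLMinModel (W : Type) where
  ne : Nonempty W
  dist : W → W → ℝ
  dist_nonneg : ∀ x y, 0 ≤ dist x y
  dist_eq_zero : ∀ x y, dist x y = 0 ↔ x = y
  min_attained : ∀ (w : W) (X : Set W), X.Nonempty → ∃ x ∈ X, ∀ y ∈ X, dist w x ≤ dist w y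
  val : ℕ → Set W

noncomputable def CSLMinModel.eval {W : Type} (M : CSLMinModel W) : CSLForm → Set W
  | .var i => M.val i
  | .bot => ∅
  | .neg A => (M.eval A)ᶜ
  | .and A B => M.eval A ∩ M.eval B
  | .cls A B => {w | setDist M.dist w (M.eval A) < setDist M.dist w (M.eval B)}

/-- Iterated disjunction of a list of formulas. -/
def bigOr : List CSLForm → CSLForm
  | [] => .bot
  | [A] => A
  | A :: B :: rest => A.or (bigOr (B :: rest))

/-- Iterated conjunction of a list of formulas. -/
def bigAnd : List CSLForm → CSLForm
  | [] => .top
  | [A] => A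
  | A :: B :: rest => A.and (bigAnd (B :: rest))

/-- Γ is inconsistent wrt CSMS: there are A₁,…,Aₙ ∈ Γ (n ≥ 1) with ⊢ ¬A₁ ⊔ … ⊔ ¬Aₙ. -/
def Inconsistent (Γ : Set CSLForm) : Prop :=
  ∃ L : List CSLForm, L ≠ [] ∧ (∀ A ∈ L, A ∈ Γ) ∧ CSMS (bigOr (L.map .neg))

def Consistent (Γ : Set CSLForm) : Prop := ¬ Inconsistent Γ

def MaxConsistent (Γ : Set CSLForm) : Prop :=
  Consistent Γ ∧ ∀ A, A ∉ Γ → Inconsistent (insert A Γ)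

/-- w^A = {¬B | (A ⇇ B) ∈ w}. -/
def projSet (w : Set CSLForm) (A : CSLForm) : Set CSLForm :=
  {F | ∃ B, F = CSLForm.neg B ∧ (A.cls B) ∈ w}

/-- R(x,y) iff every A ∈ y satisfies (A ⇇ ⊥) ∈ x. -/
def Rrel (x y : Set CSLForm) : Prop := ∀ A, A ∈ y → (A.cls .bot) ∈ x

/-- The canonical preferential relation: x ≺_w y iff
∃ B ∈ y such that ∀ A ∈ x, (A ⇇ B) ∈ w. -/
def canonPrec (w x y : Set CSLForm) : Prop :=
  ∃ B, B ∈ y ∧ ∀ A, A ∈ x → (A.cls B) ∈ w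

/-!
In a minspace, `d(w, A) < d(w, B)` holds iff some `a ∈ A` is strictly closer to `w` than every
`b ∈ B`: the infimum over `A` lies below `d(w, B)` iff some `d(w, a)` does, and since the
minimum over `B` is attained (or `B = ∅` and `d(w, B) = ∞`), `d(w, a) < d(w, B)` iff
`d(w, a) < d(w, b)` for all `b ∈ B`. So ordering worlds by distance from `w` interprets `⇇`
exactly as the distance semantics does.
-/

section setDist

variable {W : Type} {d : W → W → ℝ} {w : W}

lemma ofReal_lt_setDist_iff {X : Set W} (hX : X.Nonempty → ∃ x ∈ X, ∀ y ∈ X, d w x ≤ d w y)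
    {s : ℝ} (hs : 0 ≤ s) : ENNReal.ofReal s < setDist d w X ↔ ∀ y ∈ X, s < d w y := by
  rcases X.eq_empty_or_nonempty with rfl | hne
  · simp [setDist]
  obtain ⟨x₀, hx₀, hmin⟩ := hX hne
  have hx₀_eq : setDist d w X = ENNReal.ofReal (d w x₀) :=
    le_antisymm (biInf_le _ hx₀) (le_iInf₂ fun y hy => ENNReal.ofReal_le_ofReal (hmin y hy))
  rw [hx₀_eq, ENNReal.ofReal_lt_ofReal_iff_of_nonneg hs]
  exact ⟨fun h y hy => h.trans_le (hmin y hy), fun h => h x₀ hx₀⟩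

lemma setDist_lt_setDist_iff (hd : ∀ x, 0 ≤ d w x) {A B : Set W}
    (hB : B.Nonempty → ∃ x ∈ B, ∀ y ∈ B, d w x ≤ d w y) :
    setDist d w A < setDist d w B ↔ ∃ x ∈ A, ∀ y ∈ B, d w x < d w y := by
  conv_lhs => rw [setDist]
  simp only [iInf_lt_iff, exists_prop]
  exact exists_congr fun x => and_congr_right fun _ => ofReal_lt_setDist_iff hB (hd x)

end setDist

namespace CSLMinModel

variable {W : Type} (I : CSLMinModel W)

lemma dist_self_lt_dist {w x : W} (h : x ≠ w) : I.dist w w < I.dist w x := by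
  rw [(I.dist_eq_zero w w).2 rfl]
  exact (I.dist_nonneg w x).lt_of_ne' fun h0 => h ((I.dist_eq_zero w x).1 h0).symm

def toPrefModel : CSLPrefModel W where
  ne := I.ne
  pref w x y := I.dist w x < I.dist w y
  modular w _ y z h := (lt_or_ge (I.dist w z) (I.dist w y)).imp_right h.trans_le
  centered w x := (eq_or_ne x w).imp_right I.dist_self_lt_dist
  limit w X hX :=
    let ⟨x, hx, hmin⟩ := I.min_attained w X hX
    ⟨x, hx, fun z hz hzX => (hmin z hzX).not_gt hz⟩
  val := I.val

theorem eval_toPrefModel (A : CSLForm) : I.toPrefModel.eval A = I.eval A := by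
  induction A with
  | var i => rfl
  | bot => rfl
  | neg A ih => exact congrArg compl ih
  | and A B ihA ihB => exact congrArg₂ (· ∩ ·) ihA ihB
  | cls A B ihA ihB =>
    ext w
    change (∃ x ∈ I.toPrefModel.eval A, ∀ y ∈ I.toPrefModel.eval B, _) ↔ _
    rw [ihA, ihB]
    exact (setDist_lt_setDist_iff (I.dist_nonneg w) (I.min_attained w _)).symm

end CSLMinModel

/-- every CSL-distance minspace model has an equivalent
CSL-preferential model on the same set; in fact the one given by
x ≺_w y iff d(w,x) < d(w,y), with the same valuation, works. -/
theorem minspace_to_preferential {W : Type} (I : CSLMinModel W) :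
    ∃ J : CSLPrefModel W,
      (∀ w x y : W, J.pref w x y ↔ I.dist w x < I.dist w y) ∧
      (∀ i : ℕ, J.val i = I.val i) ∧
      (∀ A : CSLForm, J.eval A = I.eval A) :=
  ⟨I.toPrefModel, fun _ _ _ => Iff.rfl, fun _ => rfl, I.eval_toPrefModel⟩
end

section
/- For every CSL-preferential model J = (Δ, (≺_w)_{w∈Δ}, ·^J) there exists a CSL-distance minspace model I on the same set Δ that is equivalent to J, i.e. A^I = A^J for every L_CSL-formula A. -/
/-!
Fix a world `w`. For each formula `A` with nonempty extension pick a `≺_w`-minimal point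
`m_w(A)`; modularity reduces `w ∈ (A ⇇ B)` to `m_w(A) ≺_w m_w(B)` (or `B` empty). As there
are only countably many formulas, a weighted sum over the `A` with `¬ x ≺_w m_w(A)` gives a real
rank of `x` that is monotone along `≺_w` and strictly separates every point from each `m_w(B)` it
precedes. Setting `d(w, w) = 0` and `d(w, x) = 1 + rank x` otherwise, `d(w, A)` is attained at
`m_w(A)`, so comparing distances compares the points `m_w(A)`, `m_w(B)`.
-/

namespace CSLForm

def encode : CSLForm → ℕ
  | .var i => Nat.pair 0 i
  | .bot => Nat.pair 1 0
  | .neg A => Nat.pair 2 A.encode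
  | .and A B => Nat.pair 3 (Nat.pair A.encode B.encode)
  | .cls A B => Nat.pair 4 (Nat.pair A.encode B.encode)

theorem encode_injective : Function.Injective encode := by
  intro A B h
  induction A generalizing B <;> cases B <;>
    simp only [encode, Nat.pair_eq_pair, reduceCtorEq] at h ⊢ <;> grind

instance : Countable CSLForm := encode_injective.countable

end CSLForm

/-- The rank of `x` sums positive summable weights over the `i` with `¬ r x (m i)`. -/
theorem exists_rank_of_countable {α ι : Type*} [Countable ι] {r : α → α → Prop}
    (asymm : ∀ x y, r x y → ¬ r y x) (modular : ∀ x y z, r x y → r z y ∨ r x z) (m : ι → α) :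
    ∃ f : α → ℝ, (∀ x, 0 ≤ f x) ∧ (∀ x y, ¬ r y x → f x ≤ f y) ∧
      ∀ x i, r x (m i) → f x < f (m i) := by
  classical
  obtain ⟨ε, hε, c, hc, -⟩ := NNReal.exists_pos_sum_of_countable one_ne_zero ι
  set term : α → ι → ℝ := fun x i => if r x (m i) then 0 else (ε i : ℝ)
  have term_nonneg : ∀ x i, 0 ≤ term x i := fun x i => by positivity
  have summable_term : ∀ x, Summable (term x) := fun x =>
    .of_nonneg_of_le (term_nonneg x) (fun i => by simp only [term]; split_ifs <;> simp)
      (NNReal.summable_coe.2 hc.summable)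
  have term_mono : ∀ x y, ¬ r y x → ∀ i, term x i ≤ term y i := by
    intro x y hyx i
    by_cases hx : r x (m i)
    · simpa only [term, hx, if_true] using term_nonneg y i
    · have hy : ¬ r y (m i) := fun hy => (modular y (m i) x hy).elim hx hyx
      simp only [term, hx, hy, if_false, le_refl]
  refine ⟨fun x => ∑' i, term x i, fun x => tsum_nonneg (term_nonneg x),
    fun x y hyx => (summable_term x).tsum_le_tsum (term_mono x y hyx) (summable_term y),
    fun x i hxi => ?_⟩
  refine (summable_term x).tsum_lt_tsum (i := i) (term_mono _ _ (asymm x _ hxi)) ?_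
    (summable_term (m i))
  simp only [term, hxi, if_true, if_neg fun h => asymm _ _ h h]
  exact hε i

theorem setDist_empty {W : Type} (d : W → W → ℝ) (w : W) : setDist d w ∅ = ⊤ := by
  simp [setDist]

theorem setDist_eq_ofReal_of_isMinOn {W : Type} {d : W → W → ℝ} {w x : W} {X : Set W}
    (hx : x ∈ X) (hmin : IsMinOn (d w) X x) : setDist d w X = ENNReal.ofReal (d w x) :=
  le_antisymm (iInf₂_le x hx) (le_iInf₂ fun _ hy => ENNReal.ofReal_le_ofReal (hmin hy))

theorem exists_forall_rel_iff_of_minimal {α : Type*} {r : α → α → Prop}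
    (modular : ∀ x y z, r x y → r z y ∨ r x z) {X Y : Set α} {a b : α}
    (ha : a ∈ X) (ha_min : ∀ z, r z a → z ∉ X) (hb : b ∈ Y) (hb_min : ∀ z, r z b → z ∉ Y) :
    (∃ x ∈ X, ∀ y ∈ Y, r x y) ↔ r a b := by
  constructor
  · rintro ⟨x, hx, hxY⟩
    exact (modular x b a (hxY b hb)).resolve_right fun hxa => ha_min x hxa hx
  · intro hab
    exact ⟨a, ha, fun y hy => (modular a b y hab).resolve_left fun hyb => hb_min y hyb hy⟩

namespace CSLPrefModel

variable {W : Type} (J : CSLPrefModel W)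

theorem pref_asymm {w x y : W} (h : J.pref w x y) : ¬ J.pref w y x := by
  intro h'
  obtain ⟨z, hz, hz_min⟩ := J.limit w {x, y} ⟨x, Or.inl rfl⟩
  rcases hz with rfl | rfl
  · exact hz_min y h' (Or.inr rfl)
  · exact hz_min x h (Or.inl rfl)

theorem not_pref_center (w x : W) : ¬ J.pref w x w := fun h =>
  (J.centered w x).elim (fun hxw => J.pref_asymm h (hxw ▸ h)) (J.pref_asymm h)

open Classical in
noncomputable def minPoint (w : W) (X : Set W) : W :=
  if h : X.Nonempty then (J.limit w X h).choose else w

variable {J}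

theorem minPoint_mem {w : W} {X : Set W} (hX : X.Nonempty) : J.minPoint w X ∈ X := by
  rw [minPoint, dif_pos hX]
  exact (J.limit w X hX).choose_spec.1

theorem minPoint_minimal {w : W} {X : Set W} (hX : X.Nonempty) {z : W}
    (hz : J.pref w z (J.minPoint w X)) : z ∉ X := by
  rw [minPoint, dif_pos hX] at hz
  exact (J.limit w X hX).choose_spec.2 z hz

theorem isMinOn_minPoint {d : W → ℝ} {w : W} (hd : ∀ x y, ¬ J.pref w y x → d x ≤ d y)
    {X : Set W} (hX : X.Nonempty) : IsMinOn d X (J.minPoint w X) :=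
  isMinOn_iff.2 fun _ hy => hd _ _ fun h => minPoint_minimal hX h hy

theorem setDist_lt_iff {d : W → W → ℝ} {w : W} {X Y : Set W} (hd0 : ∀ x, 0 ≤ d w x)
    (hd_mono : ∀ x y, ¬ J.pref w y x → d w x ≤ d w y)
    (hd_strict : ∀ x, J.pref w x (J.minPoint w Y) → d w x < d w (J.minPoint w Y)) :
    setDist d w X < setDist d w Y ↔ ∃ x ∈ X, ∀ y ∈ Y, J.pref w x y := by
  rcases X.eq_empty_or_nonempty with rfl | hX
  · simp [setDist_empty]
  have hdX := setDist_eq_ofReal_of_isMinOn (minPoint_mem hX) (isMinOn_minPoint hd_mono hX)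
  rcases Y.eq_empty_or_nonempty with rfl | hY
  · simpa [setDist_empty, hdX] using ⟨J.minPoint w X, minPoint_mem hX⟩
  rw [hdX, setDist_eq_ofReal_of_isMinOn (minPoint_mem hY) (isMinOn_minPoint hd_mono hY),
    ENNReal.ofReal_lt_ofReal_iff_of_nonneg (hd0 _),
    exists_forall_rel_iff_of_minimal (J.modular w) (minPoint_mem hX) (fun _ => minPoint_minimal hX)
      (minPoint_mem hY) (fun _ => minPoint_minimal hY)]
  exact ⟨fun hlt => by_contra fun h => (hd_mono _ _ h).not_gt hlt, hd_strict _⟩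

variable (J)

theorem exists_dist {ι : Type*} [Countable ι] (S : ι → Set W) :
    ∃ d : W → W → ℝ, (∀ x y, 0 ≤ d x y) ∧ (∀ x y, d x y = 0 ↔ x = y) ∧
      (∀ w x y, ¬ J.pref w y x → d w x ≤ d w y) ∧
      ∀ w i x, J.pref w x (J.minPoint w (S i)) → d w x < d w (J.minPoint w (S i)) := by
  classical
  choose f hf0 hf_mono hf_strict using fun w =>
    exists_rank_of_countable (fun _ _ => J.pref_asymm (w := w)) (J.modular w)
      fun i => J.minPoint w (S i)
  refine ⟨fun w x => if w = x then 0 else 1 + f w x, fun w x => ?_, fun w x => ?_,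
    fun w x y hyx => ?_, fun w i x hx => ?_⟩
  · dsimp only
    split_ifs
    exacts [le_rfl, by linarith [hf0 w x]]
  · dsimp only
    split_ifs with h
    · simp [h]
    · simp only [h, iff_false]
      linarith [hf0 w x]
  · by_cases hx : w = x
    · simp only [hx, if_true]
      split_ifs
      exacts [le_rfl, by linarith [hf0 x y]]
    have hy : w ≠ y := by
      rintro rfl
      exact (J.centered w x).elim (fun h => hx h.symm) hyx
    simp only [hx, hy, if_false]
    linarith [hf_mono w x y hyx]
  · have hm : w ≠ J.minPoint w (S i) := fun h => J.not_pref_center w x (by rwa [← h] at hx)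
    dsimp only
    simp only [hm, if_false]
    split_ifs
    · linarith [hf0 w (J.minPoint w (S i))]
    · linarith [hf_strict w x i hx]

end CSLPrefModel

/-- every CSL-preferential model has an equivalent
CSL-distance minspace model on the same set. -/
theorem preferential_to_minspace {W : Type} (J : CSLPrefModel W) :
    ∃ I : CSLMinModel W, ∀ A : CSLForm, I.eval A = J.eval A := by
  obtain ⟨d, hd0, hd_eq_zero, hd_mono, hd_strict⟩ := J.exists_dist J.eval
  let I : CSLMinModel W := ⟨J.ne, d, hd0, hd_eq_zero,
    fun w _ hX => ⟨_, J.minPoint_mem hX, isMinOn_iff.1 (J.isMinOn_minPoint (hd_mono w) hX)⟩, J.val⟩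
  refine ⟨I, fun A => ?_⟩
  induction A with
  | var i => rfl
  | bot => rfl
  | neg A ih => exact congrArg compl ih
  | and A B ihA ihB => exact congrArg₂ (· ∩ ·) ihA ihB
  | cls A B ihA ihB =>
    ext w
    change setDist d w (I.eval A) < setDist d w (I.eval B) ↔ _
    rw [ihA, ihB]
    exact CSLPrefModel.setDist_lt_iff (hd0 w) (hd_mono w) (hd_strict w B)
end

section
/- Completeness of CSMS: every L_CSL-formula that is valid in every CSL-preferential model is derivable in the Hilbert system CSMS. -/
/-!
Suppose `A` is not derivable and extend `{¬A}` to a maximal consistent set `M₀`. The formula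
`E B := B ⇇ ⊥` is an S5 "somewhere" modality (axiom (3) gives `B → E B`, axiom (6) gives
`E B → ¬E ¬E B`), so every maximal consistent `M` with `Rrel M₀ M` agrees with `M₀` on
`E`-formulas. Filter the canonical model through the subformulas of `A`: the worlds are the truth
assignments `g` to these subformulas realised in such an `M`, i.e. those whose characteristic
conjunction `χ g` (`atomForm`) satisfies `E (χ g) ∈ M₀`, and `x ≺_w y` holds iff `χ x ⇇ χ y`
lies in the set realising `w`. Axioms (1)–(3) make this relation asymmetric, modular and
centred, and finiteness gives the limit assumption. In the truth lemma, a subformula `B` is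
equivalent to the disjunction of the `χ g` with `g B = true`, and axioms (2), (5) and (Mon) let
`⇇` distribute over these finite disjunctions.
-/

namespace CSLForm

/-- The existential modality: `A.E` holds at a point iff `A` holds somewhere. -/
abbrev E (A : CSLForm) : CSLForm := A.cls bot

end CSLForm

open CSLForm

namespace IsBoolVal

variable {v : CSLForm → Bool} (hv : IsBoolVal v)
include hv

lemma bot_eq : v bot = false := hv.1

lemma neg_eq (A : CSLForm) : v A.neg = !v A := hv.2.1 A

lemma and_eq (A B : CSLForm) : v (A.and B) = (v A && v B) := hv.2.2 A B

lemma top_eq : v top = true := by simp [top, hv.neg_eq, hv.bot_eq]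

lemma or_eq (A B : CSLForm) : v (A.or B) = (v A || v B) := by
  simp [CSLForm.or, hv.neg_eq, hv.and_eq]

lemma imp_eq (A B : CSLForm) : v (A.imp B) = (!v A || v B) := by
  simp [imp, hv.or_eq, hv.neg_eq]

lemma bigOr_eq_true : ∀ L : List CSLForm, v (bigOr L) = true ↔ ∃ A ∈ L, v A = true
  | [] => by simp [bigOr, hv.bot_eq]
  | [A] => by simp [bigOr]
  | A :: B :: L => by
    rw [bigOr, hv.or_eq, Bool.or_eq_true, bigOr_eq_true (B :: L)]
    simp

lemma bigAnd_eq_true : ∀ L : List CSLForm, v (bigAnd L) = true ↔ ∀ A ∈ L, v A = true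
  | [] => by simp [bigAnd, hv.top_eq]
  | [A] => by simp [bigAnd]
  | A :: B :: L => by
    rw [bigAnd, hv.and_eq, Bool.and_eq_true, bigAnd_eq_true (B :: L)]
    simp

lemma bigOr_map_neg_eq_true (L : List CSLForm) :
    v (bigOr (L.map .neg)) = true ↔ ∃ A ∈ L, v A = false := by
  simp [hv.bigOr_eq_true, hv.neg_eq]

end IsBoolVal

lemma CSMS.of_tautConseq {A B : CSLForm} (hA : CSMS A)
    (h : ∀ v, IsBoolVal v → v A = true → v B = true) : CSMS B :=
  .mp (.taut fun v hv => by cases hA' : v A <;> simp [hv.imp_eq, hA', h v hv]) hA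

lemma CSMS.of_tautConseq₂ {A B C : CSLForm} (hA : CSMS A) (hB : CSMS B)
    (h : ∀ v, IsBoolVal v → v A = true → v B = true → v C = true) : CSMS C :=
  .mp (hA.of_tautConseq fun v hv hA => by
    cases hB' : v B <;> simp [hv.imp_eq, hB', h v hv hA]) hB

/-- The one-point model with empty preference, as a valuation. -/
def trivVal : CSLForm → Bool
  | .var _ => false
  | .bot => false
  | .neg A => !trivVal A
  | .and A B => trivVal A && trivVal B
  | .cls A B => trivVal A && !trivVal B

lemma isBoolVal_trivVal : IsBoolVal trivVal := ⟨rfl, fun _ => rfl, fun _ _ => rfl⟩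

lemma CSMS.trivVal_eq_true {A : CSLForm} (h : CSMS A) : trivVal A = true := by
  have hv := isBoolVal_trivVal
  induction h with
  | taut h => exact h _ hv
  | mp _ _ ihAB ihA => simp_all [hv.imp_eq]
  | mon C _ ih =>
    simp only [hv.imp_eq, trivVal] at ih ⊢
    cases h : trivVal C <;> simp_all
  | _ => simp only [hv.imp_eq, hv.or_eq, trivVal]; grind

lemma CSMS.not_bot : ¬ CSMS .bot := fun h => by simpa [trivVal] using h.trivVal_eq_true

lemma inconsistent_of_CSMS {Γ : Set CSLForm} {L : List CSLForm} (hL : ∀ A ∈ L, A ∈ Γ)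
    (h : CSMS (bigOr (L.map .neg))) : Inconsistent Γ := by
  rcases L with _ | ⟨A, L⟩
  · exact absurd h CSMS.not_bot
  · exact ⟨_, List.cons_ne_nil _ _, hL, h⟩

lemma consistent_singleton_neg {A : CSLForm} (hA : ¬ CSMS A) : Consistent {A.neg} :=
  fun ⟨L, _, hL, hp⟩ => hA (hp.of_tautConseq fun v hv hp => by
    obtain ⟨B, hB, hvB⟩ := (hv.bigOr_map_neg_eq_true L).1 hp
    rw [Set.mem_singleton_iff.1 (hL B hB), hv.neg_eq] at hvB
    simpa using hvB)

lemma consistent_sUnion {c : Set (Set CSLForm)} (hc : ∀ Γ ∈ c, Consistent Γ)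
    (hchain : IsChain (· ⊆ ·) c) (hne : c.Nonempty) : Consistent (⋃₀ c) := by
  rintro ⟨L, hL, hLc, hp⟩
  obtain ⟨Γ, hΓ, hLΓ⟩ := DirectedOn.exists_mem_subset_of_finite_of_subset_sUnion hne
    hchain.directedOn L.finite_toSet (fun A hA => hLc A hA)
  exact hc Γ hΓ ⟨L, hL, fun A hA => hLΓ hA, hp⟩

theorem exists_maxConsistent_superset {Γ : Set CSLForm} (hΓ : Consistent Γ) :
    ∃ M, Γ ⊆ M ∧ MaxConsistent M := by
  obtain ⟨M, hΓM, hmax⟩ := zorn_subset_nonempty {Δ | Consistent Δ}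
    (fun c hc hchain hne => ⟨⋃₀ c, consistent_sUnion hc hchain hne,
      fun _ => Set.subset_sUnion_of_mem⟩) Γ hΓ
  exact ⟨M, hΓM, hmax.prop, fun A hA =>
    not_not.1 fun hcons => hA (hmax.2 hcons (Set.subset_insert A M) (Set.mem_insert A M))⟩

namespace MaxConsistent

variable {M : Set CSLForm} (hM : MaxConsistent M)
include hM

lemma mem_or_neg_mem (A : CSLForm) : A ∈ M ∨ A.neg ∈ M := by
  classical
  by_contra! ⟨hA, hnA⟩
  obtain ⟨L₁, -, hL₁, h₁⟩ := hM.2 A hA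
  obtain ⟨L₂, -, hL₂, h₂⟩ := hM.2 A.neg hnA
  refine hM.1 (inconsistent_of_CSMS (L := (L₁ ++ L₂).filter (· ∈ M))
    (fun B hB => of_decide_eq_true (List.mem_filter.1 hB).2) ?_)
  refine .of_tautConseq₂ h₁ h₂ fun v hv h₁ h₂ => ?_
  simp only [hv.bigOr_map_neg_eq_true] at h₁ h₂ ⊢
  obtain ⟨B, hB, hvB⟩ := h₁
  obtain ⟨C, hC, hvC⟩ := h₂
  -- `v` makes one of `A`, `¬A` true, so the member it falsifies in the other list lies in `M`
  cases hvA : v A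
  · refine ⟨C, List.mem_filter.2 ⟨List.mem_append_right _ hC, decide_eq_true ?_⟩, hvC⟩
    refine (Set.mem_insert_iff.1 (hL₂ C hC)).resolve_left ?_
    rintro rfl
    simp [hv.neg_eq, hvA] at hvC
  · refine ⟨B, List.mem_filter.2 ⟨List.mem_append_left _ hB, decide_eq_true ?_⟩, hvB⟩
    refine (Set.mem_insert_iff.1 (hL₁ B hB)).resolve_left ?_
    rintro rfl
    simp [hvA] at hvB

lemma mem_of_tautConseq {L : List CSLForm} {B : CSLForm} (hL : ∀ A ∈ L, A ∈ M)
    (h : ∀ v, IsBoolVal v → (∀ A ∈ L, v A = true) → v B = true) : B ∈ M := by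
  refine (hM.mem_or_neg_mem B).resolve_right fun hB => hM.1 ?_
  refine inconsistent_of_CSMS (L := B.neg :: L) (by simpa [hB] using hL) (.taut fun v hv => ?_)
  rw [hv.bigOr_map_neg_eq_true]
  by_cases hLv : ∀ A ∈ L, v A = true
  · exact ⟨B.neg, List.mem_cons_self, by simp [hv.neg_eq, h v hv hLv]⟩
  · obtain ⟨A, hA, hvA⟩ := not_forall₂.1 hLv
    exact ⟨A, List.mem_cons_of_mem _ hA, by simpa using hvA⟩

lemma bot_not_mem : CSLForm.bot ∉ M := fun h =>
  hM.1 (inconsistent_of_CSMS (L := [.bot]) (by simpa using h)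
    (.taut fun v hv => by simp [bigOr, hv.neg_eq, hv.bot_eq]))

lemma neg_mem_iff {A : CSLForm} : A.neg ∈ M ↔ A ∉ M :=
  ⟨fun hnA hA => hM.bot_not_mem (hM.mem_of_tautConseq (L := [A, A.neg]) (by simp [hA, hnA])
      fun v hv h => by simp [hv.neg_eq] at h),
    (hM.mem_or_neg_mem A).resolve_left⟩

lemma mem_of_CSMS {A : CSLForm} (h : CSMS A) : A ∈ M := by
  by_contra hA
  exact hM.1 (inconsistent_of_CSMS (L := [A.neg]) (by simpa using hM.neg_mem_iff.2 hA)
    (h.of_tautConseq fun v hv hA => by simp [bigOr, hv.neg_eq, hA]))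

lemma and_mem_iff {A B : CSLForm} : A.and B ∈ M ↔ A ∈ M ∧ B ∈ M :=
  ⟨fun h => ⟨hM.mem_of_tautConseq (L := [A.and B]) (by simpa using h)
      fun v hv h => by simp_all [hv.and_eq],
    hM.mem_of_tautConseq (L := [A.and B]) (by simpa using h)
      fun v hv h => by simp_all [hv.and_eq]⟩,
  fun h => hM.mem_of_tautConseq (L := [A, B]) (by simpa using h)
      fun v hv h => by simp_all [hv.and_eq]⟩

lemma or_mem_iff {A B : CSLForm} : A.or B ∈ M ↔ A ∈ M ∨ B ∈ M := by
  rw [CSLForm.or, hM.neg_mem_iff, hM.and_mem_iff, hM.neg_mem_iff, hM.neg_mem_iff]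
  tauto

lemma mem_of_CSMS_imp {A B : CSLForm} (h : CSMS (A.imp B)) (hA : A ∈ M) : B ∈ M :=
  (hM.or_mem_iff.1 (hM.mem_of_CSMS h)).resolve_left fun hnA => hM.neg_mem_iff.1 hnA hA

open Classical in
lemma isBoolVal : IsBoolVal (fun A => decide (A ∈ M)) :=
  ⟨by simpa using hM.bot_not_mem, fun A => by simp [hM.neg_mem_iff],
    fun A B => by simp [hM.and_mem_iff]⟩

lemma cls_self_not_mem (A : CSLForm) : A.cls A ∉ M := fun h =>
  (hM.or_mem_iff.1 (hM.mem_of_CSMS (.ax1 A A))).elim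
    (hM.neg_mem_iff.1 · h) (hM.neg_mem_iff.1 · h)

lemma bot_cls_not_mem (B : CSLForm) : CSLForm.bot.cls B ∉ M := fun h =>
  hM.cls_self_not_mem B <| hM.mem_of_CSMS_imp (.mon B (.taut fun v hv => by
    simp [hv.imp_eq, hv.bot_eq])) h

lemma cls_of_CSMS_imp_right {A B C : CSLForm} (hCB : CSMS (C.imp B)) (h : A.cls B ∈ M) :
    A.cls C ∈ M :=
  (hM.or_mem_iff.1 (hM.mem_of_CSMS_imp (.ax2 A B C) h)).resolve_right fun hC =>
    hM.cls_self_not_mem B (hM.mem_of_CSMS_imp (.mon B hCB) hC)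

lemma cls_or_left {A B C : CSLForm} (h : (A.or B).cls C ∈ M) :
    A.cls C ∈ M ∨ B.cls C ∈ M := by
  by_contra! hAB
  have hA := (hM.or_mem_iff.1 (hM.mem_of_CSMS_imp (.ax2 _ C A) h)).resolve_right hAB.1
  have hB := (hM.or_mem_iff.1 (hM.mem_of_CSMS_imp (.ax2 _ C B) h)).resolve_right hAB.2
  exact hM.cls_self_not_mem _ (hM.mem_of_CSMS_imp (.ax5 _ A B) (hM.and_mem_iff.2 ⟨hA, hB⟩))

lemma exists_of_bigOr_cls {B : CSLForm} :
    ∀ {L : List CSLForm}, (bigOr L).cls B ∈ M → ∃ A ∈ L, A.cls B ∈ M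
  | [], h => absurd h (hM.bot_cls_not_mem B)
  | [A], h => ⟨A, List.mem_singleton_self A, h⟩
  | A :: _ :: _, h => (hM.cls_or_left h).elim (fun h => ⟨A, List.mem_cons_self, h⟩) fun h =>
    let ⟨D, hD, h⟩ := exists_of_bigOr_cls h
    ⟨D, List.mem_cons_of_mem _ hD, h⟩

lemma cls_bigOr_of_forall {A : CSLForm} (hE : A.E ∈ M) :
    ∀ {L : List CSLForm}, (∀ B ∈ L, A.cls B ∈ M) → A.cls (bigOr L) ∈ M
  | [], _ => hE
  | [B], h => h B (List.mem_singleton_self B)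
  | B :: _ :: _, h => hM.mem_of_CSMS_imp (.ax5 A B _) <| hM.and_mem_iff.2
    ⟨h B List.mem_cons_self, cls_bigOr_of_forall hE fun D hD => h D (List.mem_cons_of_mem _ hD)⟩

lemma E_of_cls {A B : CSLForm} (h : A.cls B ∈ M) : A.E ∈ M :=
  hM.cls_of_CSMS_imp_right (.taut fun v hv => by simp [hv.imp_eq, hv.bot_eq]) h

lemma E_mem {A : CSLForm} (h : A ∈ M) : A.E ∈ M :=
  hM.mem_of_CSMS_imp (.ax3 A .bot) (hM.and_mem_iff.2 ⟨h, hM.neg_mem_iff.2 hM.bot_not_mem⟩)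

lemma E_of_E_E {A : CSLForm} (h : A.E.E ∈ M) : A.E ∈ M := by
  by_contra hA
  have h₁ : (A.E.neg.E.neg.E).neg ∈ M :=
    hM.mem_of_CSMS_imp (.ax6 A.E.neg) (hM.E_mem (hM.neg_mem_iff.2 hA))
  exact hM.neg_mem_iff.1 h₁ (hM.mem_of_CSMS_imp (.mon .bot (.ax6 A)) h)

lemma rrel_self : Rrel M M := fun _ => hM.E_mem

end MaxConsistent

lemma Rrel.E_mem_iff {M₀ M : Set CSLForm} (hM₀ : MaxConsistent M₀) (hM : MaxConsistent M)
    (hR : Rrel M₀ M) {A : CSLForm} : A.E ∈ M ↔ A.E ∈ M₀ := by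
  refine ⟨fun h => hM₀.E_of_E_E (hR _ h), fun h => ?_⟩
  by_contra hA
  exact hM₀.neg_mem_iff.1 (hM₀.mem_of_CSMS_imp (.ax6 A) h) (hR _ (hM.neg_mem_iff.2 hA))

theorem exists_maxConsistent_rrel {M₀ : Set CSLForm} (hM₀ : MaxConsistent M₀) {B : CSLForm}
    (h : B.E ∈ M₀) : ∃ M, MaxConsistent M ∧ B ∈ M ∧ Rrel M₀ M := by
  classical
  -- `C.neg.E ∉ M₀` says that `C` holds everywhere
  have hΓ : Consistent (insert B {C | C.neg.E ∉ M₀}) := by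
    rintro ⟨L, -, hL, hp⟩
    have hB : CSMS (B.imp (bigOr ((L.filter (· ≠ B)).map .neg))) :=
      hp.of_tautConseq fun v hv hp => by
        simp only [hv.imp_eq, Bool.or_eq_true, Bool.not_eq_true',
          hv.bigOr_map_neg_eq_true] at hp ⊢
        obtain ⟨A, hA, hvA⟩ := hp
        cases hvB : v B
        · exact .inl rfl
        · refine .inr ⟨A, List.mem_filter.2 ⟨hA, decide_eq_true ?_⟩, hvA⟩
          rintro rfl
          simp [hvB] at hvA
    obtain ⟨_, hmem, hE⟩ := hM₀.exists_of_bigOr_cls (hM₀.mem_of_CSMS_imp (.mon .bot hB) h)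
    obtain ⟨C, hC, rfl⟩ := List.mem_map.1 hmem
    obtain ⟨hCL, hCB⟩ := List.mem_filter.1 hC
    exact (Set.mem_insert_iff.1 (hL C hCL)).resolve_left (by simpa using hCB) hE
  obtain ⟨M, hΓM, hM⟩ := exists_maxConsistent_superset hΓ
  refine ⟨M, hM, hΓM (Set.mem_insert B _), fun A hA => ?_⟩
  by_contra hE
  refine hM.neg_mem_iff.1 (hΓM (Set.mem_insert_of_mem _ fun h => hE ?_)) hA
  exact hM₀.mem_of_CSMS_imp (.mon .bot (.taut fun v hv => by simp [hv.imp_eq, hv.neg_eq])) h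

deriving instance DecidableEq for CSLForm

def subformulas : CSLForm → Finset CSLForm
  | .var i => {.var i}
  | .bot => {.bot}
  | .neg A => insert A.neg (subformulas A)
  | .and A B => insert (A.and B) (subformulas A ∪ subformulas B)
  | .cls A B => insert (A.cls B) (subformulas A ∪ subformulas B)

lemma mem_subformulas_self (A : CSLForm) : A ∈ subformulas A := by
  cases A <;> simp [subformulas]

section Atoms

variable (Φ : CSLForm)

abbrev Atom : Type := subformulas Φ → Bool

noncomputable def atomForm (g : Atom Φ) : CSLForm :=
  bigAnd ((Finset.univ : Finset (subformulas Φ)).toList.map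
    fun C => if g C then C.1 else C.1.neg)

noncomputable def atomsWith (C : subformulas Φ) : List CSLForm :=
  ((Finset.univ : Finset (Atom Φ)).filter (· C)).toList.map (atomForm Φ)

open Classical in
noncomputable def typeOf (M : Set CSLForm) : Atom Φ := fun C => decide (C.1 ∈ M)

variable {Φ}

lemma mem_atomsWith {C : subformulas Φ} {A : CSLForm} :
    A ∈ atomsWith Φ C ↔ ∃ g : Atom Φ, g C = true ∧ atomForm Φ g = A := by
  simp [atomsWith]

lemma IsBoolVal.atomForm_eq_true {v : CSLForm → Bool} (hv : IsBoolVal v) (g : Atom Φ) :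
    v (atomForm Φ g) = true ↔ ∀ C, v C.1 = g C := by
  simp only [atomForm, hv.bigAnd_eq_true, List.mem_map, Finset.mem_toList, Finset.mem_univ,
    true_and, forall_exists_index, forall_apply_eq_imp_iff]
  refine forall_congr' fun C => ?_
  cases g C <;> simp [hv.neg_eq]

lemma MaxConsistent.atomForm_mem_iff {M : Set CSLForm} (hM : MaxConsistent M) {g : Atom Φ} :
    atomForm Φ g ∈ M ↔ typeOf Φ M = g := by
  simpa [funext_iff, typeOf] using hM.isBoolVal.atomForm_eq_true g

lemma CSMS.imp_bigOr_atomsWith (C : subformulas Φ) :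
    CSMS (C.1.imp (bigOr (atomsWith Φ C))) :=
  .taut fun v hv => by
    rw [hv.imp_eq, Bool.or_eq_true, hv.bigOr_eq_true]
    cases hC : v C.1
    · exact .inl rfl
    · exact .inr ⟨atomForm Φ fun D => v D.1, mem_atomsWith.2 ⟨_, hC, rfl⟩,
        (hv.atomForm_eq_true _).2 fun _ => rfl⟩

lemma CSMS.atomForm_imp {g : Atom Φ} {C : subformulas Φ} (hg : g C = true) :
    CSMS ((atomForm Φ g).imp C.1) :=
  .taut fun v hv => by
    cases h : v (atomForm Φ g)
    · simp [hv.imp_eq, h]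
    · simp [hv.imp_eq, (hv.atomForm_eq_true g).1 h C, hg]

end Atoms

theorem Finite.nonempty_minimal_of_asymm_of_modular {α : Type*} [Finite α]
    {r : α → α → Prop} (hasymm : ∀ x y, r x y → ¬ r y x)
    (hmod : ∀ x y z, r x y → r z y ∨ r x z) (X : Set α) (hX : X.Nonempty) :
    {y ∈ X | ∀ z, r z y → z ∉ X}.Nonempty := by
  have : IsTrans α r := ⟨fun x y z hxy hyz => (hmod x y z hxy).resolve_left (hasymm y z hyz)⟩
  have : Std.Irrefl r := ⟨fun x hxx => hasymm x x hxx hxx⟩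
  obtain ⟨y, hyX, hmin⟩ := (Finite.wellFounded_of_trans_of_irrefl r).has_min X hX
  exact ⟨y, hyX, fun z hzy hzX => hmin z hzX hzy⟩

section CanonicalModel

variable (Φ : CSLForm) (M₀ : Set CSLForm)

def IsWorld (g : Atom Φ) : Prop := ∃ M, MaxConsistent M ∧ Rrel M₀ M ∧ typeOf Φ M = g

abbrev World : Type := {g : Atom Φ // IsWorld Φ M₀ g}

variable {Φ M₀}

noncomputable def World.mcs (w : World Φ M₀) : Set CSLForm := w.2.choose

lemma World.maxConsistent (w : World Φ M₀) : MaxConsistent w.mcs := w.2.choose_spec.1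

lemma World.rrel (w : World Φ M₀) : Rrel M₀ w.mcs := w.2.choose_spec.2.1

lemma World.typeOf_mcs (w : World Φ M₀) : typeOf Φ w.mcs = w.1 := w.2.choose_spec.2.2

lemma World.mem_mcs_iff (w : World Φ M₀) (C : subformulas Φ) :
    C.1 ∈ w.mcs ↔ w.1 C = true := by
  simp [← w.typeOf_mcs, typeOf]

lemma isWorld_iff (hM₀ : MaxConsistent M₀) {g : Atom Φ} :
    IsWorld Φ M₀ g ↔ (atomForm Φ g).E ∈ M₀ := by
  refine ⟨fun ⟨M, hM, hR, hg⟩ => hR _ (hM.atomForm_mem_iff.2 hg), fun h => ?_⟩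
  obtain ⟨M, hM, hg, hR⟩ := exists_maxConsistent_rrel hM₀ h
  exact ⟨M, hM, hR, hM.atomForm_mem_iff.1 hg⟩

lemma World.E_atomForm_mem_iff (hM₀ : MaxConsistent M₀) (w : World Φ M₀) {g : Atom Φ} :
    (atomForm Φ g).E ∈ w.mcs ↔ IsWorld Φ M₀ g :=
  (w.rrel.E_mem_iff hM₀ w.maxConsistent).trans (isWorld_iff hM₀).symm

variable (Φ M₀)

def canonicalPref (w x y : World Φ M₀) : Prop :=
  (atomForm Φ x.1).cls (atomForm Φ y.1) ∈ w.mcs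

variable {Φ M₀}

lemma canonicalPref_asymm (w x y : World Φ M₀) :
    canonicalPref Φ M₀ w x y → ¬ canonicalPref Φ M₀ w y x := fun hxy hyx =>
  (w.maxConsistent.or_mem_iff.1 (w.maxConsistent.mem_of_CSMS (.ax1 _ _))).elim
    (w.maxConsistent.neg_mem_iff.1 · hxy) (w.maxConsistent.neg_mem_iff.1 · hyx)

lemma canonicalPref_modular (w x y z : World Φ M₀) (h : canonicalPref Φ M₀ w x y) :
    canonicalPref Φ M₀ w z y ∨ canonicalPref Φ M₀ w x z :=
  (w.maxConsistent.or_mem_iff.1 (w.maxConsistent.mem_of_CSMS_imp (.ax2 _ _ _) h)).symm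

lemma canonicalPref_centered (w x : World Φ M₀) : x = w ∨ canonicalPref Φ M₀ w w x := by
  refine or_iff_not_imp_left.2 fun hxw => w.maxConsistent.mem_of_CSMS_imp (.ax3 _ _) ?_
  refine w.maxConsistent.and_mem_iff.2 ⟨w.maxConsistent.atomForm_mem_iff.2 w.typeOf_mcs, ?_⟩
  refine w.maxConsistent.neg_mem_iff.2 fun hx => hxw (Subtype.ext ?_)
  rw [← w.maxConsistent.atomForm_mem_iff.1 hx, w.typeOf_mcs]

lemma World.cls_mem_of_forall (hM₀ : MaxConsistent M₀) (w x : World Φ M₀)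
    {B C : subformulas Φ} (hx : x.1 B = true)
    (h : ∀ y : World Φ M₀, y.1 C = true → canonicalPref Φ M₀ w x y) :
    B.1.cls C.1 ∈ w.mcs := by
  have hM := w.maxConsistent
  have hxE : (atomForm Φ x.1).E ∈ w.mcs := (w.E_atomForm_mem_iff hM₀).2 x.2
  have hatoms : ∀ A ∈ atomsWith Φ C, (atomForm Φ x.1).cls A ∈ w.mcs := by
    intro A hA
    obtain ⟨g, hg, rfl⟩ := mem_atomsWith.1 hA
    by_cases hgw : IsWorld Φ M₀ g
    · exact h ⟨g, hgw⟩ hg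
    · exact (hM.or_mem_iff.1 (hM.mem_of_CSMS_imp (.ax2 _ .bot _) hxE)).resolve_right
        (mt (w.E_atomForm_mem_iff hM₀).1 hgw)
  have hxC := hM.cls_of_CSMS_imp_right (.imp_bigOr_atomsWith C)
    (hM.cls_bigOr_of_forall hxE hatoms)
  exact hM.mem_of_CSMS_imp (.mon _ (.atomForm_imp hx)) hxC

lemma World.exists_of_cls_mem (hM₀ : MaxConsistent M₀) (w : World Φ M₀)
    {B C : subformulas Φ} (h : B.1.cls C.1 ∈ w.mcs) :
    ∃ x : World Φ M₀, x.1 B = true ∧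
      ∀ y : World Φ M₀, y.1 C = true → canonicalPref Φ M₀ w x y := by
  have hM := w.maxConsistent
  obtain ⟨_, hA, hAC⟩ :=
    hM.exists_of_bigOr_cls (hM.mem_of_CSMS_imp (.mon _ (.imp_bigOr_atomsWith B)) h)
  obtain ⟨g, hgB, rfl⟩ := mem_atomsWith.1 hA
  exact ⟨⟨g, (w.E_atomForm_mem_iff hM₀).1 (hM.E_of_cls hAC)⟩, hgB,
    fun y hy => hM.cls_of_CSMS_imp_right (.atomForm_imp hy) hAC⟩

variable (Φ)

noncomputable def canonicalModel (hM₀ : MaxConsistent M₀) : CSLPrefModel (World Φ M₀) where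
  ne := ⟨⟨typeOf Φ M₀, M₀, hM₀, hM₀.rrel_self, rfl⟩⟩
  pref := canonicalPref Φ M₀
  modular := canonicalPref_modular
  centered := canonicalPref_centered
  limit w := Finite.nonempty_minimal_of_asymm_of_modular (canonicalPref_asymm w)
    (canonicalPref_modular w)
  val i := {w | .var i ∈ w.mcs}

theorem canonicalModel_eval_iff (hM₀ : MaxConsistent M₀) :
    ∀ A, subformulas A ⊆ subformulas Φ →
      ∀ w, w ∈ (canonicalModel Φ hM₀).eval A ↔ A ∈ w.mcs
  | .var i, _, w => Iff.rfl
  | .bot, _, w => iff_of_false (Set.notMem_empty w) w.maxConsistent.bot_not_mem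
  | .neg A, h, w => by
    have ih := canonicalModel_eval_iff hM₀ A ((Finset.subset_insert _ _).trans h) w
    exact (not_congr ih).trans w.maxConsistent.neg_mem_iff.symm
  | .and A B, h, w => by
    have ihA := canonicalModel_eval_iff hM₀ A
      (Finset.subset_union_left.trans ((Finset.subset_insert _ _).trans h)) w
    have ihB := canonicalModel_eval_iff hM₀ B
      (Finset.subset_union_right.trans ((Finset.subset_insert _ _).trans h)) w
    exact (and_congr ihA ihB).trans w.maxConsistent.and_mem_iff.symm
  | .cls A B, h, w => by
    have hA := Finset.subset_union_left.trans ((Finset.subset_insert _ _).trans h)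
    have hB := Finset.subset_union_right.trans ((Finset.subset_insert _ _).trans h)
    let a : subformulas Φ := ⟨A, hA (mem_subformulas_self A)⟩
    let b : subformulas Φ := ⟨B, hB (mem_subformulas_self B)⟩
    have ihA (x : World Φ M₀) : x ∈ (canonicalModel Φ hM₀).eval A ↔ x.1 a = true :=
      (canonicalModel_eval_iff hM₀ A hA x).trans (x.mem_mcs_iff a)
    have ihB (y : World Φ M₀) : y ∈ (canonicalModel Φ hM₀).eval B ↔ y.1 b = true :=
      (canonicalModel_eval_iff hM₀ B hB y).trans (y.mem_mcs_iff b)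
    show (∃ x ∈ (canonicalModel Φ hM₀).eval A,
      ∀ y ∈ (canonicalModel Φ hM₀).eval B, canonicalPref Φ M₀ w x y) ↔ _
    simp only [ihA, ihB]
    exact ⟨fun ⟨x, hx, h⟩ => w.cls_mem_of_forall hM₀ x hx h, w.exists_of_cls_mem hM₀ (B := a) (C := b)⟩

end CanonicalModel

/-- completeness of CSMS with respect to CSL-preferential models. -/
theorem CSMS_complete (A : CSLForm)
    (h : ∀ (W : Type) (M : CSLPrefModel W), M.eval A = Set.univ) :
    CSMS A := by
  by_contra hA
  obtain ⟨M₀, hM₀A, hM₀⟩ := exists_maxConsistent_superset (consistent_singleton_neg hA)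
  let w₀ : World A M₀ := ⟨typeOf A M₀, M₀, hM₀, hM₀.rrel_self, rfl⟩
  have hw₀ : A ∈ w₀.mcs := (canonicalModel_eval_iff A hM₀ A subset_rfl w₀).1
    (h _ (canonicalModel A hM₀) ▸ Set.mem_univ w₀)
  have hAM₀ : A ∈ M₀ := by
    simpa [typeOf, w₀] using (w₀.mem_mcs_iff ⟨A, mem_subformulas_self A⟩).1 hw₀
  exact hM₀.neg_mem_iff.1 (hM₀A rfl) hAM₀
end

section
/- Derived theorem T4: for every L_CSL-formula A, the formula ((A ⇇ ⊥) ⇇ ⊥) → (A ⇇ ⊥) is derivable in CSMS. -/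
lemma boolval_imp {v : CSLForm → Bool} (hv : IsBoolVal v) (A B : CSLForm) :
    v (A.imp B) = (!(v A) || v B) := by
  obtain ⟨hb, hn, ha⟩ := hv
  simp only [CSLForm.imp, CSLForm.or, hn, ha]
  cases v A <;> cases v B <;> rfl

/-- T4: ((A ⇇ ⊥) ⇇ ⊥) → (A ⇇ ⊥) is derivable in CSMS. -/
theorem CSMS_T4 (A : CSLForm) :
    CSMS (((A.cls .bot).cls .bot).imp (A.cls .bot)) := by
  set P : CSLForm := A.cls .bot with hP
  set Q : CSLForm := P.neg.cls .bot with hQ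
  set R : CSLForm := Q.neg.cls .bot with hR
  have h1 : CSMS (P.imp Q.neg) := CSMS.ax6 A
  have h2 : CSMS ((P.cls .bot).imp R) := CSMS.mon _ h1
  have h3 : CSMS (Q.imp R.neg) := CSMS.ax6 P.neg
  have h4 : CSMS ((P.neg.and CSLForm.bot.neg).imp Q) := CSMS.ax3 P.neg .bot
  have htaut : CSLTautology (((P.cls .bot).imp R).imp
      ((Q.imp R.neg).imp (((P.neg.and CSLForm.bot.neg).imp Q).imp
        ((P.cls .bot).imp P)))) := by
    intro v hv
    obtain ⟨hb, hn, ha⟩ := hv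
    simp only [boolval_imp ⟨hb, hn, ha⟩, hn, ha, hb]
    cases v (P.cls .bot) <;> cases v R <;> cases v Q <;> cases v P <;> rfl
  exact ((CSMS.taut htaut).mp h2 |>.mp h3).mp h4
end

section
/- Derived theorem T5 (transitivity of ⇇): for all L_CSL-formulas A, B, C, the formula (A ⇇ B) ⊓ (B ⇇ C) → (A ⇇ C) is derivable in CSMS. -/
/-- T5: (A ⇇ B) ⊓ (B ⇇ C) → (A ⇇ C) is derivable in CSMS. -/
theorem CSMS_T5 (A B C : CSLForm) :
    CSMS (((A.cls B).and (B.cls C)).imp (A.cls C)) := by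
  have h2 := CSMS.ax2 A B C
  have h1 := CSMS.ax1 B C
  have htaut : CSMS (((A.cls B).imp ((A.cls C).or (C.cls B))).imp
      (((B.cls C).neg.or (C.cls B).neg).imp
        (((A.cls B).and (B.cls C)).imp (A.cls C)))) := by
    apply CSMS.taut
    intro v hv
    obtain ⟨hb, hn, ha⟩ := hv
    simp only [CSLForm.imp, CSLForm.or, hn, ha]
    cases v (A.cls B) <;> cases v (B.cls C) <;> cases v (A.cls C) <;>
      cases v (C.cls B) <;> rfl
  exact CSMS.mp (CSMS.mp htaut h2) h1
end

section
/- Derived rule R1 (anti-monotonicity of ⇇ in the second argument): for all L_CSL-formulas A, B, C, if A → B is derivable in CSMS then (C ⇇ B) → (C ⇇ A) is derivable in CSMS. -/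
/-- R1: if ⊢ A → B then ⊢ (C ⇇ B) → (C ⇇ A). -/
theorem CSMS_R1 (A B C : CSLForm) (h : CSMS (A.imp B)) :
    CSMS ((C.cls B).imp (C.cls A)) := by
  have h1 : CSMS ((A.cls B).imp (B.cls B)) := CSMS.mon B h
  have h2 := CSMS.ax1 B B
  have h3 := CSMS.ax2 C B A
  have t : CSMS (((A.cls B).imp (B.cls B)).imp
      (((B.cls B).neg.or (B.cls B).neg).imp
        (((C.cls B).imp ((C.cls A).or (A.cls B))).imp
          ((C.cls B).imp (C.cls A))))) := by
    apply CSMS.taut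
    intro v hv
    obtain ⟨hb, hn, ha⟩ := hv
    simp only [CSLForm.imp, CSLForm.or, hn, ha]
    cases v (A.cls B) <;> cases v (B.cls B) <;> cases v (C.cls B) <;> cases v (C.cls A) <;> rfl
  exact ((t.mp h1).mp h2).mp h3
end

section
/- If w is a CSMS-maximal consistent set and A an L_CSL-formula such that {A} is consistent, then the set w^A ∪ {A} is consistent, where w^A = {¬B | (A ⇇ B) ∈ w}. -/
noncomputable instance : DecidableEq CSLForm := Classical.decEq _

section Helpers

variable {v : CSLForm → Bool}

lemma vneg (hv : IsBoolVal v) (A : CSLForm) : v (.neg A) = !v A := hv.2.1 A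
lemma vand (hv : IsBoolVal v) (A B : CSLForm) : v (.and A B) = (v A && v B) := hv.2.2 A B
lemma vor (hv : IsBoolVal v) (A B : CSLForm) : v (A.or B) = (v A || v B) := by
  simp [CSLForm.or, vneg hv, vand hv]
lemma vimp (hv : IsBoolVal v) (A B : CSLForm) : v (A.imp B) = (!v A || v B) := by
  simp [CSLForm.imp, vor hv, vneg hv]
lemma vbigOr (hv : IsBoolVal v) (L : List CSLForm) : v (bigOr L) = L.any v := by
  induction L with
  | nil => simpa [bigOr] using hv.1
  | cons A tl ih =>
    cases tl with
    | nil => simp [bigOr]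
    | cons B rest => simp [bigOr, vor hv, ← ih]

lemma cons1 {P Q : CSLForm} (hP : CSMS P)
    (h : ∀ v, IsBoolVal v → v P = true → v Q = true) : CSMS Q := by
  refine CSMS.mp (CSMS.taut ?_) hP
  intro v hv
  rw [vimp hv]
  by_cases hvP : v P = true
  · simp [h v hv hvP]
  · simp [Bool.not_eq_true] at hvP
    simp [hvP]

lemma cons2 {P P' Q : CSLForm} (hP : CSMS P) (hP' : CSMS P')
    (h : ∀ v, IsBoolVal v → v P = true → v P' = true → v Q = true) : CSMS Q := by
  refine CSMS.mp (CSMS.mp (CSMS.taut ?_) hP) hP'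
  intro v hv
  rw [vimp hv, vimp hv]
  by_cases h1 : v P = true
  · by_cases h2 : v P' = true
    · simp [h1, h2, h v hv h1 h2]
    · simp [Bool.not_eq_true] at h2
      simp [h2]
  · simp [Bool.not_eq_true] at h1
    simp [h1]

/-- Maximal consistent sets are closed under provable binary implications. -/
lemma mcs_closed2 {w : Set CSLForm} (hw : MaxConsistent w) {C C' E : CSLForm}
    (hC : C ∈ w) (hC' : C' ∈ w) (h : CSMS ((C.and C').imp E)) : E ∈ w := by
  by_contra hE
  obtain ⟨L, hne, hmem, hpf⟩ := hw.2 E hE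
  apply hw.1
  refine ⟨C :: C' :: L.map (fun F => if F = E then C else F), by simp, ?_, ?_⟩
  · intro X hX
    simp only [List.mem_cons, List.mem_map] at hX
    rcases hX with rfl | rfl | ⟨F, hF, rfl⟩
    · exact hC
    · exact hC'
    · by_cases hFE : F = E
      · simp [hFE, hC]
      · have := hmem F hF
        simp only [Set.mem_insert_iff] at this
        rcases this with rfl | hFw
        · exact absurd rfl hFE
        · simp [hFE, hFw]
  · apply cons2 hpf h
    intro v hv h1 h2
    rw [vbigOr hv] at h1 ⊢
    obtain ⟨x, hx, hxv⟩ := List.any_eq_true.mp h1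
    obtain ⟨F, hF, rfl⟩ := List.mem_map.mp hx
    rw [vneg hv] at hxv
    apply List.any_eq_true.mpr
    by_cases hFE : F = E
    · subst hFE
      -- v F = false, so v (C ⊓ C') = false
      rw [vimp hv, vand hv] at h2
      simp only [Bool.not_eq_true'] at hxv
      rw [hxv] at h2
      simp at h2
      rcases h2 with hc | hc
      · exact ⟨C.neg, by simp, by simp [vneg hv, hc]⟩
      · exact ⟨C'.neg, by simp, by simp [vneg hv, hc]⟩
    · refine ⟨F.neg, ?_, by simp [vneg hv]; simpa using hxv⟩
      simp only [List.map_cons, List.mem_cons, List.mem_map, List.map_map]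
      right; right
      exact ⟨F, hF, by simp [hFE]⟩

def unneg : CSLForm → CSLForm
  | .neg B => B
  | _ => .bot

lemma cls_bigOr {w : Set CSLForm} {A : CSLForm} (hw : MaxConsistent w) :
    ∀ (Bs : List CSLForm), Bs ≠ [] → (∀ B ∈ Bs, (A.cls B) ∈ w) →
      (A.cls (bigOr Bs)) ∈ w := by
  intro Bs
  induction Bs with
  | nil => simp
  | cons B tl ih =>
    intro _ hmem
    cases tl with
    | nil => simpa [bigOr] using hmem B (by simp)
    | cons C rest =>
      have h1 : (A.cls B) ∈ w := hmem B (by simp)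
      have h2 : (A.cls (bigOr (C :: rest))) ∈ w :=
        ih (by simp) (fun X hX => hmem X (by simp [hX]))
      have hax := CSMS.ax5 A B (bigOr (C :: rest))
      have heq : bigOr (B :: C :: rest) = (B.or (bigOr (C :: rest))) := rfl
      rw [heq]
      exact mcs_closed2 hw h1 h2 hax

end Helpers

/-- if w is maximal consistent and {A} is consistent,
then w^A ∪ {A} is consistent. -/
theorem projSet_consistent (w : Set CSLForm) (A : CSLForm)
    (hw : MaxConsistent w) (hA : Consistent {A}) :
    Consistent (projSet w A ∪ {A}) := by
  intro hinc
  obtain ⟨L, hLne, hLmem, hLpf⟩ := hinc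
  classical
  set Bs := L.filterMap (fun F => if F = A then none else some (unneg F)) with hBsdef
  by_cases hB0 : Bs = []
  · -- every element of L is A, so ⊢ ¬A, contradicting consistency of {A}
    have hall : ∀ F ∈ L, F = A := by
      intro F hF
      by_contra hne
      have : unneg F ∈ Bs :=
        List.mem_filterMap.mpr ⟨F, hF, by simp [hne]⟩
      simp [hB0] at this
    have hnA : CSMS A.neg := by
      apply cons1 hLpf
      intro v hv hval
      rw [vbigOr hv] at hval
      obtain ⟨x, hx, hxv⟩ := List.any_eq_true.mp hval
      obtain ⟨F, hF, rfl⟩ := List.mem_map.mp hx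
      rw [hall F hF] at hxv
      exact hxv
    exact hA ⟨[A], by simp, by simp, by simpa [bigOr] using hnA⟩
  · -- the B-case
    have hBmem : ∀ B ∈ Bs, (A.cls B) ∈ w := by
      intro B hB
      obtain ⟨F, hF, hif⟩ := List.mem_filterMap.mp hB
      by_cases hFA : F = A
      · simp [hFA] at hif
      · simp only [if_neg hFA, Option.some.injEq] at hif
        rcases hLmem F hF with hP | hFA'
        · obtain ⟨B', rfl, hw'⟩ := hP
          have : unneg (CSLForm.neg B') = B' := rfl
          rw [this] at hif
          rwa [← hif]
        · exact absurd hFA' hFA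
    have hclsD : (A.cls (bigOr Bs)) ∈ w := cls_bigOr hw Bs hB0 hBmem
    have hAD : CSMS (A.imp (bigOr Bs)) := by
      apply cons1 hLpf
      intro v hv hval
      rw [vimp hv]
      by_cases hvA : v A = true
      · rw [vbigOr hv] at hval ⊢
        obtain ⟨x, hx, hxv⟩ := List.any_eq_true.mp hval
        obtain ⟨F, hF, rfl⟩ := List.mem_map.mp hx
        rw [vneg hv, Bool.not_eq_true'] at hxv
        have hFA : F ≠ A := by
          intro h; rw [h, hvA] at hxv; simp at hxv
        have hBin : unneg F ∈ Bs :=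
          List.mem_filterMap.mpr ⟨F, hF, by simp [hFA]⟩
        rcases hLmem F hF with hP | hFA'
        · obtain ⟨B', rfl, _⟩ := hP
          have hB'v : v B' = true := by
            rw [vneg hv, Bool.not_eq_false'] at hxv
            exact hxv
          have : List.any Bs v = true :=
            List.any_eq_true.mpr ⟨unneg (CSLForm.neg B'), hBin, hB'v⟩
          simp [this]
        · exact absurd hFA' hFA
      · simp only [Bool.not_eq_true] at hvA
        simp [hvA]
    have hmon := CSMS.mon (C := bigOr Bs) hAD
    have hax1 := CSMS.ax1 (bigOr Bs) (bigOr Bs)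
    have hnDD : CSMS ((bigOr Bs).cls (bigOr Bs)).neg := by
      apply cons1 hax1
      intro v hv hval
      rw [vor hv] at hval
      rcases Bool.or_eq_true_iff.mp hval with h | h <;> exact h
    have hnAD : CSMS ((A.cls (bigOr Bs)).neg) := by
      apply cons2 hmon hnDD
      intro v hv h1 h2
      rw [vimp hv] at h1
      rw [vneg hv] at h2 ⊢
      rcases Bool.or_eq_true_iff.mp h1 with h | h
      · exact h
      · rw [h] at h2; simp at h2
    exact hw.1 ⟨[A.cls (bigOr Bs)], by simp, by simpa using hclsD,
      by simpa [bigOr] using hnAD⟩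
end

section
/- The relation R on CSMS-maximal consistent sets defined by R(x,y) iff for every L_CSL-formula A, A ∈ y implies (A ⇇ ⊥) ∈ x, is an equivalence relation (reflexive, symmetric and transitive). -/
section Aux

open Classical

/-- One-point interpretation used for soundness. -/
def Ipt : CSLForm → Bool
  | .var _ => true
  | .bot => false
  | .neg A => !Ipt A
  | .and A B => Ipt A && Ipt B
  | .cls A B => Ipt A && !Ipt B

lemma Ipt_boolval : IsBoolVal Ipt := ⟨rfl, fun _ => rfl, fun _ _ => rfl⟩

lemma v_or {v : CSLForm → Bool} (hv : IsBoolVal v) (A B : CSLForm) :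
    v (A.or B) = (v A || v B) := by
  simp [CSLForm.or, hv.2.1, hv.2.2]

lemma v_imp {v : CSLForm → Bool} (hv : IsBoolVal v) (A B : CSLForm) :
    v (A.imp B) = (!v A || v B) := by
  simp [CSLForm.imp, v_or hv, hv.2.1]

lemma Ipt_sound {A : CSLForm} (h : CSMS A) : Ipt A = true := by
  induction h with
  | taut h => exact h Ipt Ipt_boolval
  | mp h1 h2 ih1 ih2 =>
      rw [v_imp Ipt_boolval, ih2] at ih1; simpa using ih1
  | @mon A B C h ih =>
      rw [v_imp Ipt_boolval] at ih ⊢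
      show (!(Ipt A && !Ipt C) || (Ipt B && !Ipt C)) = true
      cases hA : Ipt A <;> cases hB : Ipt B <;> cases hC : Ipt C <;>
        simp_all
  | ax1 A B =>
      rw [v_or Ipt_boolval]
      show (!(Ipt A && !Ipt B) || !(Ipt B && !Ipt A)) = true
      cases Ipt A <;> cases Ipt B <;> rfl
  | ax2 A B C =>
      rw [v_imp Ipt_boolval, v_or Ipt_boolval]
      show (!(Ipt A && !Ipt B) || ((Ipt A && !Ipt C) || (Ipt C && !Ipt B))) = true
      cases Ipt A <;> cases Ipt B <;> cases Ipt C <;> rfl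
  | ax3 A B =>
      rw [v_imp Ipt_boolval]
      show (!(Ipt A && !Ipt B) || (Ipt A && !Ipt B)) = true
      cases Ipt A <;> cases Ipt B <;> rfl
  | ax4 A B =>
      rw [v_imp Ipt_boolval]
      show (!(Ipt A && !Ipt B) || !Ipt B) = true
      cases Ipt A <;> cases Ipt B <;> rfl
  | ax5 A B C =>
      rw [v_imp Ipt_boolval]
      show (!((Ipt A && !Ipt B) && (Ipt A && !Ipt C)) || (Ipt A && !Ipt (CSLForm.or B C))) = true
      have : Ipt (CSLForm.or B C) = (Ipt B || Ipt C) := v_or Ipt_boolval B C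
      rw [this]
      cases Ipt A <;> cases Ipt B <;> cases Ipt C <;> rfl
  | ax6 A =>
      rw [v_imp Ipt_boolval]
      show (!(Ipt A && !false) || !(!(Ipt A && !false) && !false)) = true
      cases Ipt A <;> rfl

lemma v_bigOr {v : CSLForm → Bool} (hv : IsBoolVal v) :
    ∀ L : List CSLForm, v (bigOr L) = L.any (fun A => v A)
  | [] => hv.1
  | [A] => by simp [bigOr]
  | A :: B :: rest => by
      rw [show bigOr (A :: B :: rest) = A.or (bigOr (B :: rest)) from rfl,
        v_or hv, v_bigOr hv (B :: rest)]
      simp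

lemma csms_mp1 {X Y : CSLForm} (t : CSLTautology (X.imp Y)) (hx : CSMS X) : CSMS Y :=
  CSMS.mp (CSMS.taut t) hx

lemma csms_mp2 {X Y Z : CSLForm} (t : CSLTautology (X.imp (Y.imp Z)))
    (hx : CSMS X) (hy : CSMS Y) : CSMS Z :=
  CSMS.mp (CSMS.mp (CSMS.taut t) hx) hy

lemma csms_imp_trans {A B C : CSLForm} (h1 : CSMS (A.imp B)) (h2 : CSMS (B.imp C)) :
    CSMS (A.imp C) := by
  refine csms_mp2 ?_ h1 h2
  intro v hv
  simp only [v_imp hv]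
  cases v A <;> cases v B <;> cases v C <;> rfl

lemma mcs_not_both {Γ : Set CSLForm} (hΓ : MaxConsistent Γ) {A : CSLForm}
    (h1 : A ∈ Γ) (h2 : A.neg ∈ Γ) : False := by
  apply hΓ.1
  refine ⟨[A, A.neg], by simp, ?_, ?_⟩
  · intro B hB
    simp only [List.mem_cons, List.not_mem_nil, or_false] at hB
    rcases hB with rfl | rfl
    · exact h1
    · exact h2
  · apply CSMS.taut
    intro v hv
    show v (bigOr [A.neg, A.neg.neg]) = true
    rw [show bigOr [A.neg, A.neg.neg] = A.neg.or A.neg.neg from rfl, v_or hv,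
      hv.2.1, hv.2.1, hv.2.1]
    cases v A <;> rfl

lemma mcs_neg_mem {Γ : Set CSLForm} (hΓ : MaxConsistent Γ) {A : CSLForm}
    (h : A ∉ Γ) : A.neg ∈ Γ := by
  by_contra h2
  obtain ⟨L1, hL1ne, hL1sub, hL1⟩ := hΓ.2 A h
  obtain ⟨L2, hL2ne, hL2sub, hL2⟩ := hΓ.2 A.neg h2
  set L1' := L1.filter (fun B => decide (B ∈ Γ)) with hL1'
  set L2' := L2.filter (fun B => decide (B ∈ Γ)) with hL2'
  -- Step 1: ⊢ ¬A ∨ bigOr (L1'.map neg)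
  have s1 : CSMS (A.neg.or (bigOr (L1'.map .neg))) := by
    refine csms_mp1 ?_ hL1
    intro v hv
    rw [v_imp hv, v_or hv, v_bigOr hv, v_bigOr hv, hv.2.1]
    cases hall : (L1.map CSLForm.neg).any (fun A => v A) with
    | false => rfl
    | true =>
      simp only [Bool.not_true, Bool.false_or]
      rcases List.any_eq_true.1 hall with ⟨C, hC, hvC⟩
      rcases List.mem_map.1 hC with ⟨B, hBL, rfl⟩
      have hvB : v B = false := by
        rw [hv.2.1] at hvC; simpa using hvC
      cases hA : v A with
      | false => rfl
      | true =>
        have hBΓ : B ∈ Γ := by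
          rcases Set.mem_insert_iff.1 (hL1sub B hBL) with rfl | h'
          · rw [hvB] at hA; cases hA
          · exact h'
        have hany : ((L1'.map CSLForm.neg).any (fun A => v A)) = true :=
          List.any_eq_true.2 ⟨B.neg,
            List.mem_map.2 ⟨B, List.mem_filter.2 ⟨hBL, by simpa using hBΓ⟩, rfl⟩,
            by rw [hv.2.1, hvB]; rfl⟩
        rw [hany]; simp
  -- Step 2: ⊢ ¬¬A ∨ bigOr (L2'.map neg)
  have s2 : CSMS (A.neg.neg.or (bigOr (L2'.map .neg))) := by
    refine csms_mp1 ?_ hL2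
    intro v hv
    rw [v_imp hv, v_or hv, v_bigOr hv, v_bigOr hv]
    cases hall : (L2.map CSLForm.neg).any (fun A => v A) with
    | false => rfl
    | true =>
      simp only [Bool.not_true, Bool.false_or]
      rcases List.any_eq_true.1 hall with ⟨C, hC, hvC⟩
      rcases List.mem_map.1 hC with ⟨B, hBL, rfl⟩
      have hvB : v B = false := by
        rw [hv.2.1] at hvC; simpa using hvC
      cases hA : v A.neg with
      | false =>
        have hA' : v A = true := by
          rw [hv.2.1] at hA; simpa using hA
        rw [hv.2.1, hv.2.1, hA']; rfl
      | true =>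
        have hBΓ : B ∈ Γ := by
          rcases Set.mem_insert_iff.1 (hL2sub B hBL) with rfl | h'
          · rw [hvB] at hA; cases hA
          · exact h'
        have hany : ((L2'.map CSLForm.neg).any (fun A => v A)) = true :=
          List.any_eq_true.2 ⟨B.neg,
            List.mem_map.2 ⟨B, List.mem_filter.2 ⟨hBL, by simpa using hBΓ⟩, rfl⟩,
            by rw [hv.2.1, hvB]; rfl⟩
        rw [hany]; simp
  -- Step 3: resolution
  have s3 : CSMS ((bigOr (L1'.map .neg)).or (bigOr (L2'.map .neg))) := by
    refine csms_mp2 ?_ s1 s2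
    intro v hv
    simp only [v_imp hv, v_or hv, hv.2.1]
    cases v A <;> cases v (bigOr (L1'.map .neg)) <;> cases v (bigOr (L2'.map .neg)) <;> rfl
  -- Step 4: combine into one disjunction over the appended list
  have s4 : CSMS (bigOr ((L1' ++ L2').map .neg)) := by
    refine csms_mp1 ?_ s3
    intro v hv
    rw [v_imp hv, v_or hv, v_bigOr hv, v_bigOr hv, v_bigOr hv, List.map_append,
      List.any_append]
    cases (L1'.map CSLForm.neg).any (fun A => v A) <;>
      cases (L2'.map CSLForm.neg).any (fun A => v A) <;> rfl
  -- Step 5: conclude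
  rcases eq_or_ne (L1' ++ L2') [] with hnil | hne
  · rw [hnil] at s4
    have := Ipt_sound s4
    simp [bigOr, Ipt] at this
  · exact hΓ.1 ⟨L1' ++ L2', hne, by
      intro B hB
      rcases List.mem_append.1 hB with h | h
      · exact of_decide_eq_true (List.mem_filter.1 h).2
      · exact of_decide_eq_true (List.mem_filter.1 h).2, s4⟩

lemma mcs_mp_closed {Γ : Set CSLForm} (hΓ : MaxConsistent Γ) {A B : CSLForm}
    (hA : A ∈ Γ) (h : CSMS (A.imp B)) : B ∈ Γ := by
  by_contra hB
  have hBn : B.neg ∈ Γ := mcs_neg_mem hΓ hB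
  apply hΓ.1
  refine ⟨[A, B.neg], by simp, ?_, ?_⟩
  · intro C hC
    simp only [List.mem_cons, List.not_mem_nil, or_false] at hC
    rcases hC with rfl | rfl
    · exact hA
    · exact hBn
  · refine csms_mp1 ?_ h
    intro v hv
    show v ((A.imp B).imp (bigOr [A.neg, B.neg.neg])) = true
    rw [v_imp hv, v_imp hv,
      show bigOr [A.neg, B.neg.neg] = A.neg.or B.neg.neg from rfl,
      v_or hv, hv.2.1, hv.2.1, hv.2.1]
    cases v A <;> cases v B <;> rfl

/-- Every member A of a maximal consistent set gives (A ⇇ ⊥) in it. -/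
lemma mcs_cls_bot {Γ : Set CSLForm} (hΓ : MaxConsistent Γ) {A : CSLForm}
    (hA : A ∈ Γ) : (A.cls .bot) ∈ Γ := by
  refine mcs_mp_closed hΓ hA ?_
  refine csms_imp_trans ?_ (CSMS.ax3 A .bot)
  apply CSMS.taut
  intro v hv
  rw [v_imp hv, hv.2.2, hv.2.1, hv.1]
  cases v A <;> rfl

end Aux

/-- R is an equivalence relation on maximal consistent sets. -/
theorem Rrel_equivalence :
    (∀ x : Set CSLForm, MaxConsistent x → Rrel x x) ∧
    (∀ x y : Set CSLForm, MaxConsistent x → MaxConsistent y →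
      Rrel x y → Rrel y x) ∧
    (∀ x y z : Set CSLForm, MaxConsistent x → MaxConsistent y → MaxConsistent z →
      Rrel x y → Rrel y z → Rrel x z) := by
  refine ⟨?_, ?_, ?_⟩
  · intro x hx A hA
    exact mcs_cls_bot hx hA
  · intro x y hx hy hxy A hA
    set P := A.cls .bot with hP
    have hPx : P ∈ x := mcs_cls_bot hx hA
    by_contra hPy
    have hPny : P.neg ∈ y := mcs_neg_mem hy hPy
    have h1 : (P.neg.cls .bot) ∈ x := hxy _ hPny
    have h2 : ((P.neg.cls .bot).neg) ∈ x := mcs_mp_closed hx hPx (CSMS.ax6 A)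
    exact mcs_not_both hx h1 h2
  · intro x y z hx hy hz hxy hyz A hA
    set P := A.cls .bot with hP
    have hPy : P ∈ y := hyz _ hA
    have hQx : (P.cls .bot) ∈ x := hxy _ hPy
    by_contra hPx
    have hPnx : P.neg ∈ x := mcs_neg_mem hx hPx
    have hRx : (P.neg.cls .bot) ∈ x := mcs_cls_bot hx hPnx
    -- Mon applied to ax6 A : ⊢ (P ⇇ ⊥) → ((¬(P ⇇ ⊥)... )
    have hmon : CSMS ((P.cls .bot).imp (((P.neg.cls .bot).neg).cls .bot)) :=
      CSMS.mon .bot (CSMS.ax6 A)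
    have hSx : (((P.neg.cls .bot).neg).cls .bot) ∈ x := mcs_mp_closed hx hQx hmon
    have hSnx : ((((P.neg.cls .bot).neg).cls .bot).neg) ∈ x :=
      mcs_mp_closed hx hRx (CSMS.ax6 P.neg)
    exact mcs_not_both hx hSx hSnx
end
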